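/- arXiv:1206.3994 — 3 statements merged into one kernel-verified Lean document; each statement's English description precedes it below -/
import Mathlib

section
/- Let σ be an n-dimensional simplicial rational polyhedral cone in ℝⁿ (with lattice N = ℤⁿ). Then there exists a ℤ-basis v₁,…,vₙ of ℤⁿ such that every vᵢ lies in σ. -/
/-!
Let `s = v₁ + ⋯ + vₙ`, an interior lattice point of `σ`. By the Smith normal form of the
submodule `ℤ ∙ s`, the primitive vector `u = s / a` on the ray of `s` is a member of some
`ℤ`-basis `b` of `ℤⁿ`. All coordinates of `u` with respect to the `vₖ` equal `1 / a > 0`, so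
the transvections `b i ↦ b i + N • u` with `N` large move every other basis vector into `σ`.
-/

open Module

theorem exists_nonneg_add_nsmul {κ α : Type*} [Finite κ] [AddCommGroup α] [LinearOrder α]
    [IsOrderedAddMonoid α] [Archimedean α] (x p : κ → α) (hp : ∀ k, 0 < p k) :
    ∃ N : ℕ, 0 ≤ x + N • p := by
  choose n hn using fun k => Archimedean.arch (-x k) (hp k)
  obtain ⟨N, hN⟩ := Finite.exists_le n
  refine ⟨N, fun k => ?_⟩
  exact neg_le_iff_add_nonneg'.mp ((hn k).trans (nsmul_le_nsmul_left (hp k).le (hN k)))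

namespace Module.Basis

variable {ι R M : Type*} [CommRing R] [AddCommGroup M] [Module R M]

theorem exists_basis_eq_add_smul (b : Basis ι R M) (i₀ : ι) (m : ι → R) (hm : m i₀ = 0) :
    ∃ b' : Basis ι R M, ∀ i, b' i = b i + m i • b i₀ := by
  have h : b.constr R m (b i₀) = 0 := by rw [constr_basis, hm]
  exact ⟨b.map (LinearEquiv.transvection h), fun i => by
    rw [map_apply, LinearEquiv.transvection.apply, constr_basis]⟩

theorem exists_basis_smul_eq [IsDomain R] [IsPrincipalIdealRing R] [Finite ι]
    (b : Basis ι R M) {s : M} (hs : s ≠ 0) :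
    ∃ (b' : Basis ι R M) (i₀ : ι) (a : R), s = a • b' i₀ := by
  obtain ⟨n, snf⟩ := (R ∙ s).smithNormalForm b
  have : Module.Free R M := .of_basis b
  have hli : LinearIndependent R (fun _ : Fin 1 => s) := .of_subsingleton 0 hs
  let bs : Basis (Fin 1) R (R ∙ s) :=
    (Basis.span hli).map (LinearEquiv.ofEq _ _ (by rw [Set.range_const]))
  have hn : n = 1 := by simpa using Fintype.card_congr (snf.bN.indexEquiv bs)
  subst hn
  have hsum := congrArg Subtype.val
    (snf.bN.sum_repr ⟨s, Submodule.mem_span_singleton_self s⟩)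
  rw [Fin.sum_univ_one, Submodule.coe_smul, snf.snf, smul_smul] at hsum
  exact ⟨snf.bM, snf.f 0, _, hsum.symm⟩

theorem exists_basis_pos_smul_eq [Finite ι] (b : Basis ι ℤ M) {s : M} (hs : s ≠ 0) :
    ∃ (b' : Basis ι ℤ M) (i₀ : ι) (a : ℤ), 0 < a ∧ s = a • b' i₀ := by
  obtain ⟨b', i₀, a, rfl⟩ := b.exists_basis_smul_eq hs
  have ha : a ≠ 0 := by rintro rfl; exact hs (zero_smul ℤ _)
  rcases ha.lt_or_gt with hneg | hpos
  · exact ⟨b'.map (LinearEquiv.neg ℤ), i₀, -a, neg_pos.mpr hneg, by simp⟩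
  · exact ⟨b', i₀, a, hpos, rfl⟩

end Module.Basis

section Cone

variable {ι κ M R V : Type*} [AddCommGroup M] [Ring R] [LinearOrder R] [IsStrictOrderedRing R]
  [AddCommGroup V] [Module R V] (L : M →+ V) (B : Basis κ R V)

theorem exists_basis_repr_pos [Finite ι] [Fintype κ] [Nonempty κ] (b : Basis ι ℤ M) (v : κ → M)
    (hB : ∀ k, B k = L (v k)) :
    ∃ (b' : Basis ι ℤ M) (i₀ : ι), ∀ k, 0 < B.repr (L (b' i₀)) k := by
  have hLs : ∀ k, B.repr (L (∑ l, v l)) k = 1 := by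
    intro k; simp [map_sum, ← hB]
  have hs : ∑ l, v l ≠ 0 := by
    intro h; simpa [h] using hLs (Classical.arbitrary κ)
  obtain ⟨b', i₀, a, ha, hsa⟩ := b.exists_basis_pos_smul_eq hs
  refine ⟨b', i₀, fun k => ?_⟩
  have : (a : R) * B.repr (L (b' i₀)) k = 1 := by
    rw [← hLs k, hsa, map_zsmul, map_zsmul, Finsupp.smul_apply, zsmul_eq_mul]
  exact pos_of_mul_pos_right (this ▸ one_pos) (by exact_mod_cast ha.le)

theorem exists_basis_repr_nonneg_of_repr_pos [Finite κ] [Archimedean R] (b : Basis ι ℤ M)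
    (i₀ : ι) (hpos : ∀ k, 0 < B.repr (L (b i₀)) k) :
    ∃ b' : Basis ι ℤ M, ∀ i k, 0 ≤ B.repr (L (b' i)) k := by
  choose N hN using fun i => exists_nonneg_add_nsmul (B.repr (L (b i))) _ hpos
  classical
  obtain ⟨b', hb'⟩ :=
    b.exists_basis_eq_add_smul i₀ (Function.update (fun i => (N i : ℤ)) i₀ 0) (by simp)
  refine ⟨b', fun i k => ?_⟩
  rw [hb']
  by_cases hi : i = i₀
  · subst hi; simpa using (hpos k).le
  · simpa [hi] using hN i k

theorem exists_basis_repr_nonneg [Finite ι] [Fintype κ] [Archimedean R] (b : Basis ι ℤ M)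
    (v : κ → M) (hB : ∀ k, B k = L (v k)) :
    ∃ b' : Basis ι ℤ M, ∀ i k, 0 ≤ B.repr (L (b' i)) k := by
  cases isEmpty_or_nonempty κ
  · exact ⟨b, fun _ k => isEmptyElim k⟩
  · obtain ⟨b', i₀, hpos⟩ := exists_basis_repr_pos L B b v hB
    exact exists_basis_repr_nonneg_of_repr_pos L B b' i₀ hpos

end Cone

/-- Let σ be an n-dimensional simplicial rational polyhedral cone in ℝⁿ
(the set of nonnegative real combinations of n linearly independent vectors in ℤⁿ).
Then there exists a ℤ-basis of ℤⁿ all of whose members lie in σ. -/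
theorem stmt0 (n : ℕ) (v : Fin n → (Fin n → ℤ))
    (hv : LinearIndependent ℝ (fun i => fun j => (v i j : ℝ))) :
    ∃ b : Module.Basis (Fin n) ℤ (Fin n → ℤ),
      ∀ i : Fin n, ∃ c : Fin n → ℝ, (∀ k, 0 ≤ c k) ∧
        (fun j => ((b i) j : ℝ)) = ∑ k, c k • (fun j => (v k j : ℝ)) := by
  let L : (Fin n → ℤ) →+ (Fin n → ℝ) := (Int.castAddHom ℝ).compLeft (Fin n)
  let B := basisOfLinearIndependentOfCardEqFinrank' _ hv (by simp)
  have hB : ∀ k, B k = fun j => (v k j : ℝ) := fun k => by simp [B]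
  obtain ⟨b, hb⟩ := exists_basis_repr_nonneg L B (Pi.basisFun ℤ (Fin n)) v hB
  refine ⟨b, fun i => ⟨B.repr (L (b i)), hb i, ?_⟩⟩
  simp_rw [← hB]
  exact (B.sum_repr (L (b i))).symm
end

section
/- Let v₁,…,vₙ ∈ ℤⁿ be linearly independent and v = Σᵢ tᵢvᵢ with tᵢ ∈ [0,1), t₁ ≠ 0, and suppose v/d ∈ ℤⁿ is primitive for a positive integer d. Let σ₁ be the cone generated by v/d, v₂, …, vₙ. Then mult(σ₁) = (t₁/d)·mult(σ), where mult denotes the absolute value of the determinant of the matrix of generators. In particular mult(σ₁) < mult(σ). -/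
/-- Let v₁,…,vₙ ∈ ℤⁿ be linearly independent, v = Σ tᵢvᵢ with tᵢ ∈ [0,1),
t₁ ≠ 0, and v/d ∈ ℤⁿ primitive for a positive integer d.  If σ₁ is the cone generated by
v/d, v₂, …, vₙ then mult(σ₁) = (t₁/d)·mult(σ), where mult is the absolute value of the
determinant of the matrix of generators; in particular mult(σ₁) < mult(σ). -/
theorem stmt3 (n : ℕ) (hn : 0 < n) (v : Fin n → (Fin n → ℤ))
    (hv : LinearIndependent ℝ (fun i => fun j => (v i j : ℝ)))
    (t : Fin n → ℝ) (ht : ∀ i, t i ∈ Set.Ico (0:ℝ) 1) (ht0 : t ⟨0, hn⟩ ≠ 0)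
    (vv : Fin n → ℤ)
    (hvv : (fun j => (vv j : ℝ)) = ∑ i, t i • (fun j => (v i j : ℝ)))
    (d : ℕ) (hd : 0 < d) (w : Fin n → ℤ) (hw : ∀ j, vv j = (d : ℤ) * w j)
    (hwprim : Finset.univ.gcd w = 1)
    (M M₁ : Matrix (Fin n) (Fin n) ℝ)
    (hM : ∀ i j, M i j = (v j i : ℝ))
    (hM₁ : ∀ i j, M₁ i j = if j = (⟨0, hn⟩ : Fin n) then (w i : ℝ) else (v j i : ℝ)) :
    |M₁.det| = (t ⟨0, hn⟩ / d) * |M.det| ∧ |M₁.det| < |M.det| := by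
  set j0 : Fin n := ⟨0, hn⟩ with hj0
  have hd' : (d : ℝ) ≠ 0 := Nat.cast_ne_zero.mpr hd.ne'
  have hM₁eq : M₁ = M.updateCol j0 (fun k => ∑ i, (t i / d) • M k i) := by
    ext k j
    rw [hM₁, Matrix.updateCol_apply]
    by_cases h : j = j0
    · rw [if_pos h, if_pos h]
      have h1 : ((vv k : ℝ)) = ∑ i, t i * (v i k : ℝ) := by
        have := congrFun hvv k; simpa using this
      have h2 : (vv k : ℝ) = d * w k := by exact_mod_cast hw k
      have h3 : (w k : ℝ) = (vv k : ℝ) / d := by rw [h2]; field_simp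
      rw [h3, h1, Finset.sum_div]
      refine Finset.sum_congr rfl fun i _ => ?_
      rw [smul_eq_mul, hM]; ring
    · rw [if_neg h, if_neg h, hM]
  have hdet : M₁.det = (t j0 / d) * M.det := by
    rw [hM₁eq, Matrix.det_updateCol_sum, smul_eq_mul]
  have ht0' : 0 < t j0 := lt_of_le_of_ne (ht j0).1 (Ne.symm ht0)
  have htd : 0 < t j0 / d := by positivity
  have habs : |M₁.det| = (t j0 / d) * |M.det| := by
    rw [hdet, abs_mul, abs_of_pos htd]
  have hdetM : M.det ≠ 0 := by
    have hcols : LinearIndependent ℝ (fun i => M.transpose i) := by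
      convert hv using 2 with i
      funext j; rw [Matrix.transpose_apply, hM]
    have : IsUnit M := Matrix.linearIndependent_cols_iff_isUnit.mp hcols
    exact (Matrix.isUnit_iff_isUnit_det M).mp this |>.ne_zero
  refine ⟨habs, ?_⟩
  rw [habs]
  have h1 : t j0 / d < 1 := by
    have : t j0 / d ≤ t j0 := by
      apply div_le_self ht0'.le
      exact_mod_cast hd
    exact lt_of_le_of_lt this (ht j0).2
  have : 0 < |M.det| := abs_pos.mpr hdetM
  nlinarith
end

section
/- Let P = {u ∈ ℝⁿ : ℓⱼ(u) ≥ 0, j=1,…,m} with ℓⱼ(u) = ⟨u, bⱼ⟩ − λⱼ a simple rational polytope, and suppose a Maslov-index-2 disc class satisfies β_{i₀} = Σᵢ kᵢβᵢ + Σⱼ αⱼ with kᵢ ∈ ℤ≥₀, each αⱼ of positive symplectic area, and ∂β_{i₀} = Σᵢ kᵢ ∂βᵢ so that ℓ_{i₀}(u) = Σᵢ kᵢℓᵢ(u) + c for all u with c a constant. Then c ≤ 0; and if c = 0 then k_{i₀} = 1 and kᵢ = 0 for i ≠ i₀. -/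
/-!
Evaluate the identity `ℓ_{i₀} = Σ kᵢ ℓᵢ + c` at points of the polytope, where every `ℓᵢ` is
nonnegative. On the facet `ℓ_{i₀} = 0` the sum is nonnegative, so `c ≤ 0`. If `c = 0`, a point
of that facet off the facet `ℓᵢ = 0` (`i ≠ i₀`) forces `kᵢ = 0`; the identity then reads
`ℓ_{i₀} = k_{i₀} ℓ_{i₀}`, and a point with `ℓ_{i₀} > 0` gives `k_{i₀} = 1`.
-/

section WeightedSum

variable {ι 𝕜 : Type*} [Fintype ι] [Field 𝕜] [LinearOrder 𝕜] [IsStrictOrderedRing 𝕜]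
  {x k : ι → 𝕜} {i₀ : ι} {c : 𝕜}

lemma nonpos_of_eq_weighted_sum_add (hx : 0 ≤ x) (hk : 0 ≤ k)
    (h : x i₀ = ∑ i, k i * x i + c) (h₀ : x i₀ = 0) : c ≤ 0 := by
  have hsum : 0 ≤ ∑ i, k i * x i := Finset.sum_nonneg fun i _ => mul_nonneg (hk i) (hx i)
  linarith

lemma eq_zero_of_eq_weighted_sum (hx : 0 ≤ x) (hk : 0 ≤ k)
    (h : x i₀ = ∑ i, k i * x i) (h₀ : x i₀ = 0) {i : ι} (hi : 0 < x i) : k i = 0 := by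
  have hle : k i * x i ≤ ∑ j, k j * x j :=
    Finset.single_le_sum (f := fun j => k j * x j) (fun j _ => mul_nonneg (hk j) (hx j))
      (Finset.mem_univ i)
  have hki : k i * x i ≤ 0 := by linarith
  exact le_antisymm (nonpos_of_mul_nonpos_left hki hi) (hk i)

end WeightedSum

lemma eq_one_of_eq_weighted_sum {ι R : Type*} [Fintype ι] [Semiring R] [IsDomain R]
    {x k : ι → R} {i₀ : ι} (h : x i₀ = ∑ i, k i * x i) (hk : ∀ i, i ≠ i₀ → k i = 0)
    (h₀ : x i₀ ≠ 0) : k i₀ = 1 := by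
  rw [Finset.sum_eq_single_of_mem i₀ (Finset.mem_univ _)
    fun i _ hi => by rw [hk i hi, zero_mul]] at h
  exact mul_eq_right₀ h₀ |>.mp h.symm

theorem stmt9_general (n m : ℕ)
    (ℓ : Fin m → (Fin n → ℝ) → ℝ)
    (i₀ : Fin m) (k : Fin m → ℕ) (c : ℝ)
    (hglobal : ∀ u : Fin n → ℝ, ℓ i₀ u = (∑ i, (k i : ℝ) * ℓ i u) + c)
    (hfacet : ∃ u, (∀ j, 0 ≤ ℓ j u) ∧ ℓ i₀ u = 0)
    (hcodim : ∀ i, i ≠ i₀ → ∃ u, (∀ j, 0 ≤ ℓ j u) ∧ ℓ i₀ u = 0 ∧ 0 < ℓ i u)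
    (hint : ∃ u, (∀ j, 0 ≤ ℓ j u) ∧ 0 < ℓ i₀ u) :
    c ≤ 0 ∧ (c = 0 → k i₀ = 1 ∧ ∀ i, i ≠ i₀ → k i = 0) := by
  have hk : (0 : Fin m → ℝ) ≤ fun i => (k i : ℝ) := fun i => Nat.cast_nonneg (k i)
  obtain ⟨u, hu, hu₀⟩ := hfacet
  refine ⟨nonpos_of_eq_weighted_sum_add hu hk (hglobal u) hu₀, fun hc => ?_⟩
  have hglobal₀ u : ℓ i₀ u = ∑ i, (k i : ℝ) * ℓ i u := by rw [hglobal u, hc, add_zero]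
  have hzero : ∀ i, i ≠ i₀ → k i = 0 := fun i hi => by
    obtain ⟨v, hv, hv₀, hvi⟩ := hcodim i hi
    exact_mod_cast eq_zero_of_eq_weighted_sum hv hk (hglobal₀ v) hv₀ hvi
  obtain ⟨w, -, hw⟩ := hint
  refine ⟨?_, hzero⟩
  exact_mod_cast eq_one_of_eq_weighted_sum (x := fun j => ℓ j w) (hglobal₀ w)
    (fun i hi => by rw [hzero i hi, Nat.cast_zero]) hw.ne'

/-- Let ℓⱼ(u) = ⟨u,bⱼ⟩ − λⱼ be the affine functionals defining a simple
rational polytope P = {u : ℓⱼ(u) ≥ 0}, with the i₀-th facet nonempty, of codimension one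
(not contained in any other facet), and P having a point with ℓ_{i₀} > 0.  If
ℓ_{i₀} = Σᵢ kᵢℓᵢ + c identically with kᵢ ∈ ℤ≥₀, then c ≤ 0; and if c = 0 then k_{i₀} = 1
and kᵢ = 0 for i ≠ i₀. -/
theorem stmt9 (n m : ℕ) (b : Fin m → Fin n → ℝ) (lam : Fin m → ℝ)
    (ℓ : Fin m → (Fin n → ℝ) → ℝ)
    (hℓ : ∀ j u, ℓ j u = (∑ s, u s * b j s) - lam j)
    (i₀ : Fin m) (k : Fin m → ℕ) (c : ℝ)
    (hglobal : ∀ u : Fin n → ℝ, ℓ i₀ u = (∑ i, (k i : ℝ) * ℓ i u) + c)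
    (hfacet : ∃ u, (∀ j, 0 ≤ ℓ j u) ∧ ℓ i₀ u = 0)
    (hcodim : ∀ i, i ≠ i₀ → ∃ u, (∀ j, 0 ≤ ℓ j u) ∧ ℓ i₀ u = 0 ∧ 0 < ℓ i u)
    (hint : ∃ u, (∀ j, 0 ≤ ℓ j u) ∧ 0 < ℓ i₀ u) :
    c ≤ 0 ∧ (c = 0 → k i₀ = 1 ∧ ∀ i, i ≠ i₀ → k i = 0) :=
  stmt9_general n m ℓ i₀ k c hglobal hfacet hcodim hint
end
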